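/- Fix d ≥ 1, ε > 0 and let e_1 ∈ S^{d-1} be the first standard basis vector. Let f : ℝ^d → ℝ≥0 be an ε-indistinguishable probability density whose associated random variable 𝓡 satisfies E[𝓡] = e_1. Then there exists an ε-indistinguishable probability density f' : ℝ^d → ℝ≥0 with associated random variable 𝓡' such that E[𝓡'] = e_1, E[‖𝓡' − e_1‖²] ≤ E[‖𝓡 − e_1‖²], and f'(u) = f'(u^-) for all u ∈ ℝ^d, where u^- = (u_1, −u_2, …, −u_d) denotes the reflection of u = (u_1, u_2, …, u_d). -/

import Mathlib

open MeasureTheory ProbabilityTheory Real Filter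
open scoped ENNReal NNReal InnerProductSpace Topology

noncomputable section

/-- Euclidean space `ℝ^d`. -/
abbrev Euc (d : ℕ) : Type := EuclideanSpace ℝ (Fin d)

/-- The unit sphere `S^{d-1}` as a subset of `ℝ^d`. -/
def Sph (d : ℕ) : Set (Euc d) := Metric.sphere 0 1

/-- An `ε`-DP local randomizer from the unit sphere to a measurable space `Y`:
a measurable family of probability measures satisfying
`R(v)(E) ≤ e^ε · R(v')(E)` for all `v, v'` on the sphere and measurable `E`. -/
def IsDPRandomizer {Y : Type} [MeasurableSpace Y] (d : ℕ) (ε : ℝ)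
    (R : Euc d → Measure Y) : Prop :=
  (∀ v ∈ Sph d, IsProbabilityMeasure (R v)) ∧
  (∀ E : Set Y, MeasurableSet E → Measurable fun v => R v E) ∧
  ∀ v ∈ Sph d, ∀ v' ∈ Sph d, ∀ E : Set Y, MeasurableSet E →
    R v E ≤ ENNReal.ofReal (Real.exp ε) * R v' E

/-- The uniform (normalized surface) probability measure on the unit sphere of `ℝ^d`,
viewed as a measure on the ambient space. -/
def uniformSphere (d : ℕ) : Measure (Euc d) :=
  (((volume : Measure (Euc d)).toSphere Set.univ)⁻¹ •
    ((volume : Measure (Euc d)).toSphere)).map Subtype.val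

/-- The worst-case mean squared error `err_n(A, R)` of a protocol, where the `n`
reports `R(v_1), …, R(v_n)` are independent. -/
def errN {Y : Type} [MeasurableSpace Y] (d n : ℕ)
    (A : (Fin n → Y) → Euc d) (R : Euc d → Measure Y) : ℝ :=
  ⨆ v : Fin n → (Metric.sphere (0 : Euc d) 1),
    ∫ z, ‖A z - (n : ℝ)⁻¹ • ∑ i, (v i : Euc d)‖ ^ 2
      ∂(Measure.pi fun i => R (v i))

/-- Additive (averaging) aggregation `AdA`. -/
def adA (d n : ℕ) (z : Fin n → Euc d) : Euc d := (n : ℝ)⁻¹ • ∑ i, z i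

/-- The error of a canonical randomizer, `err(R) = sup_{v ∈ S^{d-1}} E‖R(v) − v‖²`. -/
def errC (d : ℕ) (R : Euc d → Measure (Euc d)) : ℝ :=
  ⨆ v : Metric.sphere (0 : Euc d) 1, ∫ u, ‖u - (v : Euc d)‖ ^ 2 ∂(R v)

/-- The incomplete Beta function `B(x; a, b) = ∫_0^x t^{a-1}(1-t)^{b-1} dt`. -/
def incBeta (x a b : ℝ) : ℝ := ∫ t in (0:ℝ)..x, t ^ (a - 1) * (1 - t) ^ (b - 1)

/-- The normalization constant `m` of `PrivUnit(p, γ)`, with `a = (d-1)/2` and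
`τ = (1+γ)/2`:  `m = ((1-γ²)^a/(2^{d-2}(d-1)))·(p/(B(a,a)−B(τ;a,a)) + (1−p)/B(τ;a,a))`. -/
def puNorm (d : ℕ) (p γ : ℝ) : ℝ :=
  ((1 - γ ^ 2) ^ (((d : ℝ) - 1) / 2) / (2 ^ ((d : ℝ) - 2) * ((d : ℝ) - 1))) *
    (p / (incBeta 1 (((d : ℝ) - 1) / 2) (((d : ℝ) - 1) / 2) -
          incBeta ((1 + γ) / 2) (((d : ℝ) - 1) / 2) (((d : ℝ) - 1) / 2)) +
     (1 - p) / incBeta ((1 + γ) / 2) (((d : ℝ) - 1) / 2) (((d : ℝ) - 1) / 2))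

/-- The spherical cap `{u : ⟨u, v⟩ ≥ γ}`. -/
def cap (d : ℕ) (γ : ℝ) (v : Euc d) : Set (Euc d) := {u | γ ≤ ⟪u, v⟫_ℝ}

/-- The mixture measure of `PrivUnit(p, γ)` before normalization: with probability `p`
draw from the uniform measure conditioned on the cap `{u : ⟨u,v⟩ ≥ γ}`, and with
probability `1 − p` from the uniform measure conditioned on its complement. -/
def privUnitRaw (d : ℕ) (p γ : ℝ) (v : Euc d) : Measure (Euc d) :=
  ENNReal.ofReal p • (uniformSphere d)[|cap d γ v] +
    ENNReal.ofReal (1 - p) • (uniformSphere d)[|(cap d γ v)ᶜ]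

/-- The `PrivUnit(p, γ)` randomizer of Bhowmick et al.: the mixture above
rescaled by `1/m`. -/
def privUnit (d : ℕ) (p γ : ℝ) (v : Euc d) : Measure (Euc d) :=
  (privUnitRaw d p γ v).map (fun u => (puNorm d p γ)⁻¹ • u)

/-- The first standard basis vector `e_1` of `ℝ^d` (zero if `d = 0`). -/
def eFirst (d : ℕ) : Euc d :=
  if h : 0 < d then EuclideanSpace.single (⟨0, h⟩ : Fin d) (1 : ℝ) else 0

/-- The reflection of `u` in coordinates aligned with `v`: it keeps the component
of `u` along `v` and negates the orthogonal component.  For `v = e_1` this is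
`u^- = (u_1, −u_2, …, −u_d)`. -/
def reflAlong (d : ℕ) (v u : Euc d) : Euc d := (2 * ⟪u, v⟫_ℝ) • v - u

/-- A density is `ε`-indistinguishable if `f(u₁) ≤ e^ε f(u₂)` whenever `‖u₁‖ = ‖u₂‖`. -/
def IsIndistDensity (d : ℕ) (ε : ℝ) (f : Euc d → ℝ≥0) : Prop :=
  ∀ u1 u2 : Euc d, ‖u1‖ = ‖u2‖ → (f u1 : ℝ) ≤ Real.exp ε * (f u2 : ℝ)

/-- The measure on `ℝ^d` with density `f` with respect to Lebesgue measure. -/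
def densMeasure (d : ℕ) (f : Euc d → ℝ≥0) : Measure (Euc d) :=
  volume.withDensity fun u => (f u : ℝ≥0∞)

/-- The uniform probability measure on the sphere of radius `C` in `ℝ^d`. -/
def uniformSphereR (d : ℕ) (C : ℝ) : Measure (Euc d) :=
  (uniformSphere d).map (fun u => C • u)

/-- The standard normal density `φ`. -/
def stdGaussPDF (x : ℝ) : ℝ := (Real.sqrt (2 * Real.pi))⁻¹ * Real.exp (-(x ^ 2) / 2)

/-- The standard normal CDF `Φ`. -/
def stdGaussCDF (x : ℝ) : ℝ := ((gaussianReal 0 1) (Set.Iic x)).toReal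

/-- The inverse standard normal CDF `Φ⁻¹`. -/
def probit : ℝ → ℝ := Function.invFun stdGaussCDF

/-- The Gaussian measure `N(0, σ² I)` on `ℝ^d` with iid `N(0, σ²)` coordinates. -/
def isoGaussian (d : ℕ) (σ2 : ℝ≥0) : Measure (Euc d) :=
  (Measure.pi fun _ : Fin d => gaussianReal 0 σ2).map
    (EuclideanSpace.equiv (Fin d) ℝ).symm

/-- The distribution of the coefficient `α` in `PrivUnitG(p, q)` in dimension `d`:
a mixture of `N(0, 1/d)` conditioned on `{≥ γ}` (weight `p`) and on `{< γ}`
(weight `1 − p`), where `γ = σ·Φ⁻¹(q)` and `σ = 1/√d`. -/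
def alphaMix (d : ℕ) (p q : ℝ) : Measure ℝ :=
  ENNReal.ofReal p •
      (gaussianReal 0 (d : ℝ≥0)⁻¹)[|Set.Ici (Real.sqrt (d : ℝ)⁻¹ * probit q)] +
    ENNReal.ofReal (1 - p) •
      (gaussianReal 0 (d : ℝ≥0)⁻¹)[|Set.Iio (Real.sqrt (d : ℝ)⁻¹ * probit q)]

/-- The normalization constant `m = σ·φ(γ/σ)·(p/(1−q) − (1−p)/q)` of `PrivUnitG(p, q)`,
with `σ = 1/√d` and `γ = σ·Φ⁻¹(q)`. -/
def mG (d : ℕ) (p q : ℝ) : ℝ :=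
  Real.sqrt (d : ℝ)⁻¹ * stdGaussPDF (probit q) * (p / (1 - q) - (1 - p) / q)

/-- The `PrivUnitG(p, q)` randomizer: on input `v`, output `(α v + V^⊥)/m` where
`α ~ alphaMix d p q` and `V^⊥ = W − ⟨W, v⟩ v` with `W ~ N(0, I/d)` independent of `α`;
`V^⊥` is Gaussian with covariance `σ²(I − v vᵀ)`. -/
def privUnitG (d : ℕ) (p q : ℝ) (v : Euc d) : Measure (Euc d) :=
  ((alphaMix d p q).prod (isoGaussian d (d : ℝ≥0)⁻¹)).map
    (fun aw => (mG d p q)⁻¹ • (aw.1 • v + (aw.2 - ⟪aw.2, v⟫_ℝ • v)))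

/-- The optimal error `err*_{ε,d}(PrivUnitG)`: the infimum of the error of
`PrivUnitG(p, q)` over `p, q ∈ (0,1)` with `(p/(1−p))·(q/(1−q)) ≤ e^ε`. -/
def errStarG (d : ℕ) (ε : ℝ) : ℝ :=
  sInf {e : ℝ | ∃ p q : ℝ, p ∈ Set.Ioo (0:ℝ) 1 ∧ q ∈ Set.Ioo (0:ℝ) 1 ∧
    p / (1 - p) * (q / (1 - q)) ≤ Real.exp ε ∧ e = errC d (privUnitG d p q)}

/-- The CDF of the first coordinate of a uniform point on `S^{d-1}`. -/
def sphereCDF (d : ℕ) (t : ℝ) : ℝ :=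
  ((uniformSphere d) {u | ⟪u, eFirst d⟫_ℝ ≤ t}).toReal

/-- `γ₂` such that `q = P(W_1 ≤ γ₂)` for `W` uniform on the sphere. -/
def gammaOf (d : ℕ) (q : ℝ) : ℝ := Function.invFun (sphereCDF d) q

/-- `PrivUnit(p, q)`: the `PrivUnit(p, γ₂)` randomizer with `γ₂` chosen so that
`q = P(W_1 ≤ γ₂)`. -/
def privUnitPQ (d : ℕ) (p q : ℝ) : Euc d → Measure (Euc d) :=
  privUnit d p (gammaOf d q)

/-- The optimal error `err*_{ε,d}(PrivUnit)`: the infimum of the error of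
`PrivUnit(p, q)` over `p, q ∈ (0,1)` with `(p/(1−p))·(q/(1−q)) ≤ e^ε`. -/
def errStarU (d : ℕ) (ε : ℝ) : ℝ :=
  sInf {e : ℝ | ∃ p q : ℝ, p ∈ Set.Ioo (0:ℝ) 1 ∧ q ∈ Set.Ioo (0:ℝ) 1 ∧
    p / (1 - p) * (q / (1 - q)) ≤ Real.exp ε ∧ e = errC d (privUnitPQ d p q)}

/-- `C_{ε,d} = (ε/d)·err*_{ε,d}(PrivUnitG)`. -/
def Ced (d : ℕ) (ε : ℝ) : ℝ := ε / (d : ℝ) * errStarG d ε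

/-!
Averaging the law of `𝓡` with its image under the reflection `u ↦ u⁻` keeps the mean `e₁` and
the mean squared error about `e₁`, because the reflection is a linear isometry fixing `e₁`.
The work lies in finding a density of the averaged law that is reflection invariant and
`ε`-indistinguishable at every point: `f` is not assumed measurable, so `densMeasure d f` is
built from lower integrals and `(f u + f u⁻) / 2` need not be a density of the averaged law.
Instead, let `M u = inf {f w | ‖w‖ = ‖u‖}`, so that `M ≤ f ≤ e^ε M`. The averaged law has the
invariant measurable density `k u = (h u + h u⁻) / 2`, where `h` is a Radon–Nikodym derivative
of the law of `𝓡`, and `k ≤ e^ε g` almost everywhere for an invariant measurable `g ≤ M`.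
Clamping, `F = max M (min k (e^ε g))` lies between `M` and `e^ε M` everywhere, and it is still
a density of the averaged law since `M` has smaller lower integrals than `k` on every set.
Any function between the radial `M` and `e^ε M` is `ε`-indistinguishable.
-/

section WithDensity

variable {α : Type*} [MeasurableSpace α] {μ : Measure α}

theorem withDensity_comp_eq_map {e : α ≃ᵐ α} (he : MeasurePreserving e μ μ)
    (hinv : Function.Involutive e) (q : α → ℝ≥0∞) :
    μ.withDensity (fun x => q (e x)) = (μ.withDensity q).map e := by
  ext s hs
  rw [Measure.map_apply e.measurable hs, withDensity_apply _ hs,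
    withDensity_apply _ (e.measurable hs),
    ← he.setLIntegral_comp_preimage_emb e.measurableEmbedding]
  simp only [hinv _]

theorem exists_measurable_le_withDensity_eq (μ : Measure α) (f : α → ℝ≥0∞)
    (hf : ∫⁻ x, f x ∂μ ≠ ∞) :
    ∃ g : α → ℝ≥0∞, Measurable g ∧ g ≤ f ∧ μ.withDensity g = μ.withDensity f := by
  obtain ⟨g, hgm, hgf, hfg⟩ := exists_measurable_le_lintegral_eq μ f
  refine ⟨g, hgm, hgf, Measure.ext fun s hs => ?_⟩
  rw [withDensity_apply _ hs, withDensity_apply _ hs]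
  refine le_antisymm (lintegral_mono fun x => hgf x) ?_
  have hfin : ∫⁻ x in sᶜ, f x ∂μ ≠ ∞ := ne_top_of_le_ne_top hf (setLIntegral_le_lintegral _ _)
  refine ENNReal.le_of_add_le_add_right hfin ?_
  calc ∫⁻ x in s, f x ∂μ + ∫⁻ x in sᶜ, f x ∂μ
      = ∫⁻ x in s, g x ∂μ + ∫⁻ x in sᶜ, g x ∂μ := by
        rw [lintegral_add_compl _ hs, lintegral_add_compl _ hs, hfg]
    _ ≤ ∫⁻ x in s, g x ∂μ + ∫⁻ x in sᶜ, f x ∂μ := by gcongr with x; exact hgf x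

theorem withDensity_max_eq_of_withDensity_le {M k : α → ℝ≥0∞} (hk : Measurable k)
    (hMk : μ.withDensity M ≤ μ.withDensity k) :
    μ.withDensity (fun x => max (M x) (k x)) = μ.withDensity k := by
  refine le_antisymm (Measure.le_iff.2 fun s hs => ?_)
    (withDensity_mono (ae_of_all _ fun x => le_max_right _ _))
  rw [withDensity_apply _ hs, withDensity_apply _ hs]
  obtain ⟨φ, hφm, hφ, hφint⟩ :=
    exists_measurable_le_lintegral_eq (μ.restrict s) fun x => max (M x) (k x)
  set T := {x | k x < φ x}
  have hT : MeasurableSet T := measurableSet_lt hk hφm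
  have hφM : ∀ x ∈ T, φ x ≤ M x := fun x hx => (le_max_iff.1 (hφ x)).resolve_right (not_le.2 hx)
  calc ∫⁻ x in s, max (M x) (k x) ∂μ
      = ∫⁻ x in T, φ x ∂μ.restrict s + ∫⁻ x in Tᶜ, φ x ∂μ.restrict s := by
        rw [hφint, lintegral_add_compl _ hT]
    _ ≤ ∫⁻ x in T, M x ∂μ.restrict s + ∫⁻ x in Tᶜ, k x ∂μ.restrict s :=
        add_le_add (setLIntegral_mono' hT hφM)
          (setLIntegral_mono' hT.compl fun x hx => not_lt.1 hx)
    _ ≤ ∫⁻ x in T, k x ∂μ.restrict s + ∫⁻ x in Tᶜ, k x ∂μ.restrict s := by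
        gcongr ?_ + _
        rw [Measure.restrict_restrict hT, ← withDensity_apply _ (hT.inter hs),
          ← withDensity_apply _ (hT.inter hs)]
        exact Measure.le_iff'.1 hMk _
    _ = ∫⁻ x in s, k x ∂μ := lintegral_add_compl _ hT

theorem withDensity_max_min_eq {M k g : α → ℝ≥0∞} (hk : Measurable k) (hg : Measurable g)
    (hkg : k ≤ᵐ[μ] g) (hMk : μ.withDensity M ≤ μ.withDensity k) :
    μ.withDensity (fun x => max (M x) (min (k x) (g x))) = μ.withDensity k := by
  have hmin : μ.withDensity (fun x => min (k x) (g x)) = μ.withDensity k :=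
    withDensity_congr_ae (hkg.mono fun x hx => min_eq_left hx)
  rw [withDensity_max_eq_of_withDensity_le (hk.min hg) (hmin ▸ hMk), hmin]

theorem ae_le_of_withDensity_le [SigmaFinite μ] {f g : α → ℝ≥0∞} (hf : Measurable f)
    (hfg : μ.withDensity f ≤ μ.withDensity g) : f ≤ᵐ[μ] g :=
  ae_le_of_forall_setLIntegral_le_of_sigmaFinite hf fun s hs _ => by
    simpa only [withDensity_apply _ hs] using Measure.le_iff'.1 hfg s

end WithDensity

section Symmetrize

variable {α : Type*} [MeasurableSpace α]

def symmetrize (μ : Measure α) (e : α → α) : Measure α := (2⁻¹ : ℝ≥0∞) • (μ + μ.map e)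

theorem isProbabilityMeasure_symmetrize {μ : Measure α} [IsProbabilityMeasure μ] {e : α → α}
    (he : Measurable e) : IsProbabilityMeasure (symmetrize μ e) :=
  ⟨by simp [symmetrize, Measure.map_apply he .univ, ENNReal.inv_two_add_inv_two]⟩

theorem le_symmetrize {θ ν : Measure α} {e : α → α} (he : Measurable e) (hθν : θ ≤ ν)
    (hθe : θ.map e = θ) : θ ≤ symmetrize ν e := by
  calc θ = (2⁻¹ : ℝ≥0∞) • (θ + θ.map e) := by
        rw [hθe, ← two_smul ℝ≥0∞, smul_smul,
          ENNReal.inv_mul_cancel two_ne_zero ENNReal.ofNat_ne_top, one_smul]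
    _ ≤ symmetrize ν e := by
        unfold symmetrize
        gcongr

theorem withDensity_symmetrize {μ : Measure α} {e : α ≃ᵐ α} (he : MeasurePreserving e μ μ)
    (hinv : Function.Involutive e) {h : α → ℝ≥0∞} (hh : Measurable h) :
    μ.withDensity (fun x => 2⁻¹ * (h x + h (e x))) = symmetrize (μ.withDensity h) e := by
  change μ.withDensity ((2⁻¹ : ℝ≥0∞) • (h + h ∘ e)) = _
  rw [withDensity_smul _ (hh.add (hh.comp e.measurable)), withDensity_add_left hh,
    Function.comp_def, withDensity_comp_eq_map he hinv, symmetrize]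

variable {E : Type*} [NormedAddCommGroup E] [NormedSpace ℝ E]

theorem integral_symmetrize {μ : Measure α} (e : α ≃ᵐ α) {q : α → E} (hq : Integrable q μ)
    (hqe : Integrable (fun x => q (e x)) μ) :
    ∫ x, q x ∂symmetrize μ e = (2 : ℝ)⁻¹ • (∫ x, q x ∂μ + ∫ x, q (e x) ∂μ) := by
  rw [symmetrize, integral_smul_measure,
    integral_add_measure hq (e.measurableEmbedding.integrable_map_iff.2 hqe), integral_map_equiv]
  simp

theorem integral_symmetrize_of_comp_eq {μ : Measure α} (e : α ≃ᵐ α) {q : α → E}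
    (hq : ∀ x, q (e x) = q x) : ∫ x, q x ∂symmetrize μ e = ∫ x, q x ∂μ := by
  by_cases hint : Integrable q μ
  · rw [integral_symmetrize e hint (by simpa only [hq] using hint)]
    simp only [hq]
    rw [← two_smul ℝ, smul_smul]
    norm_num
  · have hint' : ¬ Integrable q (symmetrize μ e) := by
      rw [symmetrize, integrable_smul_measure (by norm_num) (by norm_num), integrable_add_measure]
      exact fun h => hint h.1
    rw [integral_undef hint, integral_undef hint']

theorem integral_id_symmetrize [CompleteSpace E] [MeasurableSpace E] [BorelSpace E]
    {μ : Measure E} (L : E ≃ₗᵢ[ℝ] E) (hμ : Integrable (fun x => x) μ)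
    (hL : L (∫ x, x ∂μ) = ∫ x, x ∂μ) :
    ∫ x, x ∂symmetrize μ L = ∫ x, x ∂μ := by
  refine (integral_symmetrize L.toHomeomorph.toMeasurableEquiv hμ
    (L.toLinearIsometry.toContinuousLinearMap.integrable_comp hμ)).trans ?_
  change (2 : ℝ)⁻¹ • (_ + ∫ x, L.toLinearIsometry x ∂_) = _
  rw [L.toLinearIsometry.integral_comp_comm, LinearIsometryEquiv.coe_toLinearIsometry, hL,
    ← two_smul ℝ, smul_smul]
  norm_num

theorem exists_invariant_withDensity_eq_symmetrize {μ : Measure α} [SigmaFinite μ]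
    {e : α ≃ᵐ α} (he : MeasurePreserving e μ μ) (hinv : Function.Involutive e)
    {f M : α → ℝ≥0∞} {c : ℝ≥0∞} (hc1 : 1 ≤ c) (hc : c ≠ ∞) (hf : ∫⁻ x, f x ∂μ ≠ ∞)
    (hMf : M ≤ f) (hfM : f ≤ c • M) (hMe : ∀ x, M (e x) = M x) :
    ∃ F : α → ℝ≥0∞, M ≤ F ∧ F ≤ c • M ∧ (∀ x, F (e x) = F x) ∧
      μ.withDensity F = symmetrize (μ.withDensity f) e := by
  set ν := μ.withDensity f
  have : IsFiniteMeasure ν := isFiniteMeasure_withDensity hf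
  set h := ν.rnDeriv μ
  have hhm : Measurable h := Measure.measurable_rnDeriv _ _
  have hh : μ.withDensity h = ν :=
    Measure.withDensity_rnDeriv_eq _ _ (withDensity_absolutelyContinuous _ _)
  obtain ⟨g₀, hg₀m, hg₀M, hg₀⟩ := exists_measurable_le_withDensity_eq μ M
    (ne_top_of_le_ne_top hf (lintegral_mono fun x => hMf x))
  have hhg₀ : h ≤ᵐ[μ] c • g₀ := by
    refine ae_le_of_withDensity_le hhm ?_
    rw [hh, withDensity_smul _ hg₀m, hg₀, ← withDensity_smul' _ _ hc]
    exact withDensity_mono (ae_of_all _ hfM)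
  set g : α → ℝ≥0∞ := fun x => max (g₀ x) (g₀ (e x))
  set k : α → ℝ≥0∞ := fun x => 2⁻¹ * (h x + h (e x))
  have hkg : k ≤ᵐ[μ] fun x => c * g x := by
    filter_upwards [hhg₀, he.quasiMeasurePreserving.ae hhg₀] with x h₁ h₂
    calc k x ≤ 2⁻¹ * (c * g x + c * g x) :=
          mul_le_mul_right (add_le_add (h₁.trans (mul_le_mul_right (le_max_left _ _) c))
            (h₂.trans (mul_le_mul_right (le_max_right _ _) c))) _
      _ = c * g x := by
        rw [← two_mul, ← mul_assoc, ENNReal.inv_mul_cancel two_ne_zero ENNReal.ofNat_ne_top,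
          one_mul]
  have hk : μ.withDensity k = symmetrize ν e := by
    rw [← hh]
    exact withDensity_symmetrize he hinv hhm
  have hMk : μ.withDensity M ≤ μ.withDensity k := by
    refine hk ▸ le_symmetrize e.measurable (withDensity_mono (ae_of_all _ hMf)) ?_
    rw [← withDensity_comp_eq_map he hinv]
    simp only [hMe]
  refine ⟨fun x => max (M x) (min (k x) (c * g x)), fun x => le_max_left _ _, fun x => ?_,
    fun x => ?_, ?_⟩
  · refine max_le (le_mul_of_one_le_left zero_le hc1) ((min_le_right _ _).trans ?_)
    exact mul_le_mul_right (max_le (hg₀M x) ((hg₀M (e x)).trans (hMe x).le)) c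
  · simp only [k, g, hMe, hinv x, add_comm (h x), max_comm (g₀ x)]
  · have hkm : Measurable k := (hhm.add (hhm.comp e.measurable)).const_mul _
    have hgm : Measurable g := hg₀m.max (hg₀m.comp e.measurable)
    rw [withDensity_max_min_eq hkm (hgm.const_mul c) hkg hMk, hk]

end Symmetrize

section Radial

variable {E : Type*} [Norm E]

def radialInf (f : E → ℝ≥0∞) (u : E) : ℝ≥0∞ :=
  ⨅ (w : E) (_ : ‖w‖ = ‖u‖), f w

theorem radialInf_le (f : E → ℝ≥0∞) : radialInf f ≤ f :=
  fun u => iInf₂_le (f := fun w (_ : ‖w‖ = ‖u‖) => f w) u rfl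

theorem radialInf_congr (f : E → ℝ≥0∞) {u w : E} (h : ‖u‖ = ‖w‖) :
    radialInf f u = radialInf f w := by
  simp only [radialInf, h]

theorem le_mul_radialInf {f : E → ℝ≥0∞} {c : ℝ≥0∞} (hc₀ : c ≠ 0) (hc : c ≠ ∞)
    (hf : ∀ u w, ‖u‖ = ‖w‖ → f u ≤ c * f w) : f ≤ c • radialInf f := by
  intro u
  simp only [Pi.smul_apply, smul_eq_mul, radialInf, ENNReal.mul_iInf_of_ne hc₀ hc]
  exact le_iInf₂ fun w hw => hf u w hw.symm

theorem le_mul_of_radialInf_le {f F : E → ℝ≥0∞} {c : ℝ≥0∞} (hfF : radialInf f ≤ F)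
    (hFf : F ≤ c • radialInf f) {u w : E} (h : ‖u‖ = ‖w‖) : F u ≤ c * F w :=
  calc F u ≤ c * radialInf f u := hFf u
    _ = c * radialInf f w := by rw [radialInf_congr f h]
    _ ≤ c * F w := mul_le_mul_right (hfF w) c

end Radial

theorem isIndistDensity_iff {d : ℕ} {ε : ℝ} {f : Euc d → ℝ≥0} :
    IsIndistDensity d ε f ↔
      ∀ u₁ u₂ : Euc d, ‖u₁‖ = ‖u₂‖ → (f u₁ : ℝ≥0∞) ≤ ENNReal.ofReal (exp ε) * f u₂ := by
  refine forall₂_congr fun u₁ u₂ => imp_congr_right fun _ => ?_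
  rw [← ENNReal.ofReal_coe_nnreal, ← ENNReal.ofReal_coe_nnreal (p := f u₂),
    ← ENNReal.ofReal_mul (exp_pos ε).le, ENNReal.ofReal_le_ofReal_iff (by positivity)]

theorem norm_eFirst {d : ℕ} (hd : 0 < d) : ‖eFirst d‖ = 1 := by
  simp [eFirst, hd]

theorem reflAlong_eq_reflection {d : ℕ} {v : Euc d} (hv : ‖v‖ = 1) (u : Euc d) :
    reflAlong d v u = (ℝ ∙ v).reflection u := by
  rw [reflAlong, Submodule.reflection_apply, Submodule.starProjection_unit_singleton ℝ hv u,
    real_inner_comm, two_smul, two_mul, add_smul]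

/-- Reflection Symmetry Lemma.
Given an `ε`-indistinguishable probability density `f` with mean `e_1`, there is
an `ε`-indistinguishable probability density `f'` with mean `e_1`, no larger
mean squared error about `e_1`, and `f'(u) = f'(u^-)` for all `u`, where
`u^- = (u_1, −u_2, …, −u_d)` is the reflection of `u` about the `e_1`-axis. -/
theorem stmt6 (d : ℕ) (hd : 1 ≤ d) (ε : ℝ) (hε : 0 < ε)
    (f : Euc d → ℝ≥0) (hind : IsIndistDensity d ε f)
    (hprob : IsProbabilityMeasure (densMeasure d f))
    (hmean : ∫ u, u ∂(densMeasure d f) = eFirst d) :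
    ∃ f' : Euc d → ℝ≥0, IsIndistDensity d ε f' ∧
      IsProbabilityMeasure (densMeasure d f') ∧
      (∫ u, u ∂(densMeasure d f') = eFirst d) ∧
      (∫ u, ‖u - eFirst d‖ ^ 2 ∂(densMeasure d f') ≤
        ∫ u, ‖u - eFirst d‖ ^ 2 ∂(densMeasure d f)) ∧
      (∀ u : Euc d, f' u = f' (reflAlong d (eFirst d) u)) := by
  set v := eFirst d
  have hv : ‖v‖ = 1 := norm_eFirst hd
  set L := (ℝ ∙ v).reflection
  have hLv : L v = v :=
    Submodule.reflection_mem_subspace_eq_self (Submodule.mem_span_singleton_self v)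
  set e : Euc d ≃ᵐ Euc d := L.toMeasurableEquiv
  set c := ENNReal.ofReal (exp ε)
  have hc1 : 1 ≤ c := ENNReal.one_le_ofReal.2 (one_le_exp hε.le)
  obtain ⟨F, hMF, hFM, hFe, hF⟩ := exists_invariant_withDensity_eq_symmetrize (e := e)
    L.measurePreserving (ℝ ∙ v).reflection_reflection hc1 ENNReal.ofReal_ne_top
    (by simpa [densMeasure] using measure_ne_top (densMeasure d f) .univ) (radialInf_le _)
    (le_mul_radialInf (zero_lt_one.trans_le hc1).ne' ENNReal.ofReal_ne_top
      (isIndistDensity_iff.1 hind)) fun u => radialInf_congr _ (L.norm_map u)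
  have hFfin : ∀ u, F u ≠ ∞ := fun u => ne_top_of_le_ne_top
    (ENNReal.mul_ne_top ENNReal.ofReal_ne_top ENNReal.coe_ne_top)
    ((hFM u).trans (mul_le_mul_right (radialInf_le _ u) c))
  have hdens : densMeasure d (fun u => (F u).toNNReal) = symmetrize (densMeasure d f) L := by
    simp only [densMeasure, ENNReal.coe_toNNReal (hFfin _)]
    exact hF
  refine ⟨fun u => (F u).toNNReal, ?_,
    hdens ▸ isProbabilityMeasure_symmetrize L.continuous.measurable, ?_, ?_, fun u => ?_⟩
  · refine isIndistDensity_iff.2 fun u₁ u₂ h => ?_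
    simpa only [ENNReal.coe_toNNReal (hFfin _)] using le_mul_of_radialInf_le hMF hFM h
  · have hint : Integrable (fun u : Euc d => u) (densMeasure d f) :=
      .of_integral_ne_zero (hmean ▸ norm_ne_zero_iff.1 (hv ▸ one_ne_zero))
    rw [hdens, integral_id_symmetrize L hint (by rw [hmean, hLv])]
    exact hmean
  · rw [hdens]
    refine (integral_symmetrize_of_comp_eq e fun u => ?_).le
    change ‖L u - v‖ ^ 2 = _
    rw [← hLv, ← map_sub, L.norm_map, hLv]
  · rw [reflAlong_eq_reflection hv]
    exact congrArg ENNReal.toNNReal (hFe u).symm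

end
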